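/- arXiv:math/0703545 — 5 statements merged into one kernel-verified Lean document; each statement's English description precedes it below -/
import Mathlib

section
/- Let (X, B, μ) be a probability space and φ a Young function satisfying φ(x)φ(y) ≤ φ(rxy) for all x,y ≥ 0, for some r > 0. Then for every measurable function h : X → ℝ one has φ( (1/r) |h|^μ_φ ) ≤ ∫_X φ(|h|) dμ, where |h|^μ_φ := inf{a > 0 : ∫_X φ(|h|/a) dμ ≤ 1} is the Luxemburg norm. -/
open MeasureTheory ENNReal Filter

noncomputable section

/-- A (finite) Young function: an increasing convex function `φ : [0,∞) → [0,∞)`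
with `φ 0 = 0` and `φ x → ∞` as `x → ∞`. -/
def IsYoungFunction (φ : ℝ → ℝ) : Prop :=
  MonotoneOn φ (Set.Ici 0) ∧ ConvexOn ℝ (Set.Ici 0) φ ∧ φ 0 = 0 ∧
    Tendsto φ atTop atTop

/-- Generalized inverse of a Young function, as a map `ℝ≥0∞ → ℝ≥0∞`
(so that in particular `φ⁻¹(∞) = ∞`). -/
def yinv (φ : ℝ → ℝ) (y : ℝ≥0∞) : ℝ≥0∞ :=
  sInf {x : ℝ≥0∞ | ∃ r : ℝ, 0 ≤ r ∧ x = ENNReal.ofReal r ∧ y ≤ ENNReal.ofReal (φ r)}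

/-- The minorizing metric
`τ_{m,φ}(s,t) = max_{x ∈ {s,t}} ∫_0^{d(s,t)} φ⁻¹(1 / m(B(x,ε))) dε`,
with the conventions `1/0 = ∞`, `φ⁻¹(∞) = ∞`. -/
def tauDist {T : Type*} [MetricSpace T] [MeasurableSpace T]
    (m : Measure T) (φ : ℝ → ℝ) (s t : T) : ℝ≥0∞ :=
  max (∫⁻ ε in Set.Ioc (0 : ℝ) (dist s t), yinv φ (1 / m (Metric.closedBall s ε)))
    (∫⁻ ε in Set.Ioc (0 : ℝ) (dist s t), yinv φ (1 / m (Metric.closedBall t ε)))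

/-- `f^d(u,v) = |f(u) - f(v)| / d(u,v)`, equal to `0` on the diagonal. -/
def fdiv {T : Type*} [MetricSpace T] (f : T → ℝ) (p : T × T) : ℝ :=
  |f p.1 - f p.2| / dist p.1 p.2

/-- The Luxemburg norm `|g|^ν_χ = inf {a > 0 : ∫ χ(|g|/a) dν ≤ 1}`, with value `∞`
if no such `a` exists. -/
def luxNorm {X : Type*} [MeasurableSpace X] (ν : Measure X) (χ : ℝ → ℝ)
    (g : X → ℝ) : ℝ≥0∞ :=
  sInf {a : ℝ≥0∞ | ∃ b : ℝ, 0 < b ∧ a = ENNReal.ofReal b ∧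
    ∫⁻ u, ENNReal.ofReal (χ (|g u| / b)) ∂ν ≤ 1}

/-- The Amemiya norm `‖g‖^μ_χ = inf_{a>0} a (1 + ∫ χ(|g|/a) dμ)`. -/
def amemiyaNorm {X : Type*} [MeasurableSpace X] (μ : Measure X) (χ : ℝ → ℝ)
    (g : X → ℝ) : ℝ≥0∞ :=
  sInf {c : ℝ≥0∞ | ∃ a : ℝ, 0 < a ∧
    c = ENNReal.ofReal a * (1 + ∫⁻ u, ENNReal.ofReal (χ (|g u| / a)) ∂μ)}

/-- `r_0(x) = D(T)` and, for `k ≥ 1`,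
`r_k(x) = min {ε ≥ 0 : 1 / m(B(x,ε)) ≤ φ(R^k)}` (with `1/0 = ∞`). -/
def rad {T : Type*} [MetricSpace T] [MeasurableSpace T]
    (m : Measure T) (φ : ℝ → ℝ) (R : ℝ) : ℕ → T → ℝ
  | 0, _ => Metric.diam (Set.univ : Set T)
  | k + 1, x => sInf {ε : ℝ | 0 ≤ ε ∧
      1 / m (Metric.closedBall x ε) ≤ ENNReal.ofReal (φ (R ^ (k + 1)))}

/-- `r^l_k(x) = ∑_{i=k}^{l} 2^(i-k) r_i(x)`. -/
def radl {T : Type*} [MetricSpace T] [MeasurableSpace T]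
    (m : Measure T) (φ : ℝ → ℝ) (R : ℝ) (k l : ℕ) (x : T) : ℝ :=
  ∑ i ∈ Finset.Icc k l, (2 : ℝ) ^ (i - k) * rad m φ R i x

/-- The averaging operator `S_k f (x) = (1 / m(B_k(x))) ∫_{B_k(x)} f dm`,
with the convention `0/0 = 0`. -/
def avg {T : Type*} [MetricSpace T] [MeasurableSpace T]
    (m : Measure T) (φ : ℝ → ℝ) (R : ℝ) (k : ℕ) (f : T → ℝ) (x : T) : ℝ :=
  (∫ u in Metric.closedBall x (rad m φ R k x), f u ∂m) /
    (m (Metric.closedBall x (rad m φ R k x))).toReal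

/-- The iterated averaging operator `iterAvg k l f = S_l S_{l-1} ⋯ S_k f` (for `k ≤ l`). -/
def iterAvg {T : Type*} [MetricSpace T] [MeasurableSpace T]
    (m : Measure T) (φ : ℝ → ℝ) (R : ℝ) (k : ℕ) : ℕ → (T → ℝ) → T → ℝ
  | 0, f => avg m φ R 0 f
  | l + 1, f =>
      if l + 1 ≤ k then avg m φ R (l + 1) f
      else avg m φ R (l + 1) (iterAvg m φ R k l f)

/-- The set `{k ≥ 1 : B^l_k(s) ∪ B^l_k(t) ⊆ B°(u, r_{k-1}(u)) for every u ∈ B^l_k(x)}`,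
whose greatest element is `τ_x`. -/
def tauSet {T : Type*} [MetricSpace T] [MeasurableSpace T]
    (m : Measure T) (φ : ℝ → ℝ) (R : ℝ) (l : ℕ) (s t x : T) : Set ℕ :=
  {k : ℕ | 1 ≤ k ∧ ∀ u ∈ Metric.closedBall x (radl m φ R k l x),
    Metric.closedBall s (radl m φ R k l s) ∪ Metric.closedBall t (radl m φ R k l t) ⊆
      Metric.ball u (rad m φ R (k - 1) u)}

/-- Lemma 2 of the paper.  The conclusion
`φ((1/r)·|h|^μ_φ) ≤ ∫ φ(|h|) dμ` is expressed via all real lower bounds `b` of the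
(possibly infinite) Luxemburg norm. -/
theorem statement8 (X : Type) [MeasurableSpace X] (μ : Measure X)
    (hμ : IsProbabilityMeasure μ) (φ : ℝ → ℝ) (hφ : IsYoungFunction φ)
    (r : ℝ) (hr : 0 < r)
    (hφr : ∀ x y : ℝ, 0 ≤ x → 0 ≤ y → φ x * φ y ≤ φ (r * x * y))
    (h : X → ℝ) (hh : Measurable h) :
    ∀ b : ℝ, 0 ≤ b → ENNReal.ofReal b ≤ luxNorm μ φ h →
      ENNReal.ofReal (φ (b / r)) ≤ ∫⁻ x, ENNReal.ofReal (φ |h x|) ∂μ := by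
  intro b hb hble
  obtain ⟨hmono, hconv, h0, -⟩ := hφ
  have hφnn : ∀ t : ℝ, 0 ≤ t → 0 ≤ φ t := fun t ht => by
    have := hmono (Set.self_mem_Ici) ht ht
    rwa [h0] at this
  set I := ∫⁻ x, ENNReal.ofReal (φ |h x|) ∂μ with hI
  have key : ∀ a : ℝ, 0 < a → a < b → ENNReal.ofReal (φ (a / r)) ≤ I := by
    intro a ha hab
    have hnot : ¬ (∫⁻ x, ENNReal.ofReal (φ (|h x| / a)) ∂μ ≤ 1) := by
      intro hle
      have h1 : luxNorm μ φ h ≤ ENNReal.ofReal a := sInf_le ⟨a, ha, rfl, hle⟩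
      have h2 : ENNReal.ofReal a < ENNReal.ofReal b :=
        (ENNReal.ofReal_lt_ofReal_iff (ha.trans hab)).mpr hab
      exact absurd (lt_of_le_of_lt (hble.trans h1) h2) (lt_irrefl _)
    have hge : (1 : ℝ≥0∞) ≤ ∫⁻ x, ENNReal.ofReal (φ (|h x| / a)) ∂μ :=
      (not_le.mp hnot).le
    have hpt : ∀ x, ENNReal.ofReal (φ (a / r)) * ENNReal.ofReal (φ (|h x| / a)) ≤
        ENNReal.ofReal (φ |h x|) := by
      intro x
      rw [← ENNReal.ofReal_mul (hφnn _ (by positivity))]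
      apply ENNReal.ofReal_le_ofReal
      have hx := hφr (a / r) (|h x| / a) (by positivity) (by positivity)
      have heq : r * (a / r) * (|h x| / a) = |h x| := by field_simp
      rwa [heq] at hx
    have hψ : Monotone (fun t : ℝ => φ (max t 0)) := fun s t hst =>
      hmono (le_max_right s 0) (le_max_right t 0) (max_le_max hst le_rfl)
    have hmeas : Measurable (fun x => ENNReal.ofReal (φ (|h x| / a))) := by
      have : (fun x => ENNReal.ofReal (φ (|h x| / a))) =
          fun x => ENNReal.ofReal ((fun t : ℝ => φ (max t 0)) (|h x| / a)) := by
        funext x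
        simp only [max_eq_left (div_nonneg (abs_nonneg _) ha.le)]
      rw [this]
      exact ENNReal.measurable_ofReal.comp (hψ.measurable.comp (hh.abs.div_const a))
    calc ENNReal.ofReal (φ (a / r)) = ENNReal.ofReal (φ (a / r)) * 1 := (mul_one _).symm
      _ ≤ ENNReal.ofReal (φ (a / r)) * ∫⁻ x, ENNReal.ofReal (φ (|h x| / a)) ∂μ :=
          mul_le_mul_right hge _
      _ = ∫⁻ x, ENNReal.ofReal (φ (a / r)) * ENNReal.ofReal (φ (|h x| / a)) ∂μ :=
          (lintegral_const_mul _ hmeas).symm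
      _ ≤ I := lintegral_mono hpt
  rcases eq_or_lt_of_le hb with hb0 | hbpos
  · rw [← hb0]
    simp [h0]
  · have hconv' : ConvexOn ℝ (Set.Ioi (0 : ℝ)) φ :=
      hconv.subset Set.Ioi_subset_Ici_self (convex_Ioi 0)
    have hcont : ContinuousOn φ (Set.Ioi (0 : ℝ)) := hconv'.continuousOn isOpen_Ioi
    have hbr : b / r ∈ Set.Ioi (0 : ℝ) := Set.mem_Ioi.mpr (by positivity)
    have htend1 : Filter.Tendsto (fun a : ℝ => a / r) (nhdsWithin b (Set.Iio b))
        (nhdsWithin (b / r) (Set.Ioi 0)) := by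
      rw [tendsto_nhdsWithin_iff]
      constructor
      · exact ((continuous_id.div_const r).tendsto b).mono_left nhdsWithin_le_nhds
      · filter_upwards [mem_nhdsWithin_of_mem_nhds (Ioi_mem_nhds hbpos)] with a ha
        have ha' : 0 < a := Set.mem_Ioi.mp ha
        exact Set.mem_Ioi.mpr (by positivity)
    have htend2 : Filter.Tendsto (fun a : ℝ => ENNReal.ofReal (φ (a / r)))
        (nhdsWithin b (Set.Iio b)) (nhds (ENNReal.ofReal (φ (b / r)))) :=
      (ENNReal.continuous_ofReal.tendsto _).comp ((hcont (b / r) hbr).tendsto.comp htend1)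
    have hev : ∀ᶠ a in nhdsWithin b (Set.Iio b), ENNReal.ofReal (φ (a / r)) ≤ I := by
      filter_upwards [mem_nhdsWithin_of_mem_nhds (Ioi_mem_nhds hbpos),
        self_mem_nhdsWithin] with a ha1 ha2
      exact key a ha1 ha2
    exact le_of_tendsto htend2 hev
end
end

section
/- Let φ be a Young function with φ(1)=1 satisfying, for some R>1, φ(R^k)/φ(R^{k+1}) ≤ φ(R^{k-1})/φ(R^k) for all integers k≥1. Then φ(x)φ(y) ≤ φ(R²xy) for all x, y ≥ 1. -/
open MeasureTheory ENNReal Filter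

noncomputable section

/-- Lemma 3 of the paper: condition (miau) implies `φ ∈ ∇'`
with `r = R²` and `c = 1`. -/
theorem statement9 (φ : ℝ → ℝ) (hφ : IsYoungFunction φ) (hφ1 : φ 1 = 1)
    (R : ℝ) (hR : 1 < R)
    (hmiau : ∀ k : ℕ, 1 ≤ k → φ (R ^ k) / φ (R ^ (k + 1)) ≤ φ (R ^ (k - 1)) / φ (R ^ k)) :
    ∀ x y : ℝ, 1 ≤ x → 1 ≤ y → φ x * φ y ≤ φ (R ^ 2 * x * y) := by
  obtain ⟨hmono, hconv, h0, htop⟩ := hφ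
  have hR0 : (0:ℝ) < R := lt_trans one_pos hR
  have hpow1 : ∀ k : ℕ, (1:ℝ) ≤ R ^ k := fun k => one_le_pow₀ hR.le
  set a : ℕ → ℝ := fun k => φ (R ^ k) with ha
  have ha1 : ∀ k, 1 ≤ a k := by
    intro k
    have := hmono (by norm_num : (1:ℝ) ∈ Set.Ici 0)
      (le_trans zero_le_one (hpow1 k)) (hpow1 k)
    simpa [hφ1] using this
  have hapos : ∀ k, 0 < a k := fun k => lt_of_lt_of_le one_pos (ha1 k)
  -- key: a(j+1)^2 ≤ a j * a (j+2)
  have hkey : ∀ j : ℕ, a (j+1) * a (j+1) ≤ a (j+2) * a j := by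
    intro j
    have h := hmiau (j+1) (by omega)
    simp only [Nat.add_sub_cancel] at h
    have := (div_le_div_iff₀ (hapos (j+2)) (hapos (j+1))).mp h
    simpa [ha, mul_comm] using this
  set b : ℕ → ℝ := fun j => a (j+1) / a j with hb
  have hbmono : Monotone b := by
    apply monotone_nat_of_le_succ
    intro j
    rw [hb, div_le_div_iff₀ (hapos j) (hapos (j+1))]
    calc a (j+1) * a (j+1) ≤ a (j+2) * a j := hkey j
      _ = a (j+1+1) * a j := by norm_num
  have ha0 : a 0 = 1 := by simp [ha, hφ1]
  have hmuladd : ∀ m n : ℕ, a m * a n ≤ a (m + n) := by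
    intro m
    induction m with
    | zero => intro n; simp [ha0]
    | succ m ih =>
      intro n
      have hbm : 0 ≤ b m := le_of_lt (div_pos (hapos (m+1)) (hapos m))
      have h1 : a (m+1) * a n = b m * (a m * a n) := by
        rw [hb, ← mul_assoc, div_mul_cancel₀ _ (hapos m).ne' ]
      rw [h1]
      calc b m * (a m * a n) ≤ b m * a (m + n) :=
            mul_le_mul_of_nonneg_left (ih n) hbm
        _ ≤ b (m + n) * a (m + n) :=
            mul_le_mul_of_nonneg_right (hbmono (Nat.le_add_right m n)) (hapos _).le
        _ = a (m + n + 1) := by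
            rw [hb, div_mul_cancel₀ _ (hapos (m+n)).ne']
        _ = a (m + 1 + n) := by ring_nf
  intro x y hx hy
  have hx0 : (0:ℝ) < x := lt_of_lt_of_le one_pos hx
  have hy0 : (0:ℝ) < y := lt_of_lt_of_le one_pos hy
  set i := Nat.floor (Real.logb R x) with hi
  set j := Nat.floor (Real.logb R y) with hj
  have hlogx : 0 ≤ Real.logb R x := Real.logb_nonneg hR hx
  have hlogy : 0 ≤ Real.logb R y := Real.logb_nonneg hR hy
  have hrlog : ∀ z : ℝ, 0 < z → R ^ Real.logb R z = z :=
    fun z hz => Real.rpow_logb hR0 (ne_of_gt hR) hz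
  have hple : ∀ (c d : ℝ), c ≤ d → R ^ c ≤ (R:ℝ) ^ d :=
    fun c d h => Real.rpow_le_rpow_of_exponent_le hR.le h
  have hRx : R ^ i ≤ x := by
    have : (R:ℝ) ^ ((i:ℝ)) ≤ R ^ Real.logb R x :=
      hple _ _ (Nat.floor_le hlogx)
    rw [hrlog x hx0] at this
    simpa [Real.rpow_natCast] using this
  have hxR : x ≤ R ^ (i + 1) := by
    have h1 : Real.logb R x ≤ ((i + 1 : ℕ) : ℝ) := by
      push_cast
      exact le_of_lt (Nat.lt_floor_add_one _)
    have : R ^ Real.logb R x ≤ (R:ℝ) ^ (((i+1:ℕ)):ℝ) := hple _ _ h1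
    rw [hrlog x hx0, Real.rpow_natCast] at this
    exact this
  have hRy : R ^ j ≤ y := by
    have : (R:ℝ) ^ ((j:ℝ)) ≤ R ^ Real.logb R y :=
      hple _ _ (Nat.floor_le hlogy)
    rw [hrlog y hy0] at this
    simpa [Real.rpow_natCast] using this
  have hyR : y ≤ R ^ (j + 1) := by
    have h1 : Real.logb R y ≤ ((j + 1 : ℕ) : ℝ) := by
      push_cast
      exact le_of_lt (Nat.lt_floor_add_one _)
    have : R ^ Real.logb R y ≤ (R:ℝ) ^ (((j+1:ℕ)):ℝ) := hple _ _ h1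
    rw [hrlog y hy0, Real.rpow_natCast] at this
    exact this
  have hφx : φ x ≤ a (i + 1) :=
    hmono (le_of_lt hx0) (le_trans zero_le_one (hpow1 _)) hxR
  have hφy : φ y ≤ a (j + 1) :=
    hmono (le_of_lt hy0) (le_trans zero_le_one (hpow1 _)) hyR
  have hφx0 : 0 ≤ φ x := by
    have := hmono (le_refl (0:ℝ)) (le_of_lt hx0) (le_of_lt hx0)
    simpa [h0] using this
  have hφy0 : 0 ≤ φ y := by
    have := hmono (le_refl (0:ℝ)) (le_of_lt hy0) (le_of_lt hy0)
    simpa [h0] using this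
  have hfin : a (i + j + 2) ≤ φ (R ^ 2 * x * y) := by
    have harg : (R:ℝ) ^ (i + j + 2) ≤ R ^ 2 * x * y := by
      have : (R:ℝ) ^ (i + j + 2) = R ^ 2 * R ^ i * R ^ j := by ring
      rw [this]
      have hR2 : (0:ℝ) < R ^ 2 := pow_pos hR0 2
      calc R ^ 2 * R ^ i * R ^ j ≤ R ^ 2 * x * R ^ j := by
            apply mul_le_mul_of_nonneg_right _ (pow_pos hR0 j).le
            exact mul_le_mul_of_nonneg_left hRx hR2.le
        _ ≤ R ^ 2 * x * y := by
            apply mul_le_mul_of_nonneg_left hRy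
            positivity
    exact hmono (le_trans zero_le_one (hpow1 _))
      (le_trans (le_trans zero_le_one (hpow1 _)) harg) harg
  calc φ x * φ y ≤ a (i + 1) * a (j + 1) :=
        mul_le_mul hφx hφy hφy0 (le_trans zero_le_one (ha1 _))
    _ ≤ a (i + 1 + (j + 1)) := hmuladd _ _
    _ = a (i + j + 2) := by ring_nf
    _ ≤ φ (R ^ 2 * x * y) := hfin
end
end

section
/- Let (T,d) be a compact metric space, m a Borel probability measure on T, φ a Young function with φ(1)=1, and R > 2. Then for every integer c ≥ 1 and every x ∈ T: Σ_{k≥c} r_k(x) R^k ≤ (R/(R−1)) ∫_0^{r_c(x)} φ^{-1}(1/m(B(x,ε))) dε, where φ^{-1} is the generalized inverse of φ and the conventions 1/0 := ∞, φ^{-1}(∞) := ∞ are used (both sides may be infinite). -/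
open MeasureTheory ENNReal Filter

noncomputable section

/-! For `ε < r_k(x)` the ball `B(x,ε)` is too light, so `φ⁻¹(1/m(B(x,ε))) ≥ R^k`.
Writing `r_k R^k = ∫_0^{r_c} R^k 1[ε < r_k] dε` and summing under the integral, it remains
to bound `∑_{k ≥ c, ε < r_k} R^k` pointwise. Since `r_k` decreases in `k`, the indices
`k ≥ c` with `ε < r_k` form an initial segment, and a geometric sum is at most `R/(R-1)` times
its last term, hence at most `R/(R-1) φ⁻¹(1/m(B(x,ε)))`. -/

lemma ofReal_le_yinv {φ : ℝ → ℝ} (hmono : MonotoneOn φ (Set.Ici 0)) {s : ℝ} (hs : 0 ≤ s)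
    {y : ℝ≥0∞} (hy : ENNReal.ofReal (φ s) < y) : ENNReal.ofReal s ≤ yinv φ y := by
  refine le_sInf ?_
  rintro _ ⟨t, ht, rfl, hty⟩
  refine ENNReal.ofReal_le_ofReal (le_of_not_gt fun hts => ?_)
  have hφ : φ t ≤ φ s := hmono ht hs hts.le
  exact (hy.trans_le (hty.trans (ENNReal.ofReal_le_ofReal hφ))).false

lemma sum_range_pow_add_le {R : ℝ} (hR : 1 < R) (c n : ℕ) :
    ∑ k ∈ Finset.range (n + 1), R ^ (c + k) ≤ R / (R - 1) * R ^ (c + n) := by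
  have hR1 : 0 < R - 1 := by linarith
  have hgeom : ∑ k ∈ Finset.range (n + 1), R ^ (c + k)
      = R ^ c * ((R ^ (n + 1) - 1) / (R - 1)) := by
    rw [← geom_sum_eq hR.ne', Finset.mul_sum]
    simp only [pow_add]
  calc ∑ k ∈ Finset.range (n + 1), R ^ (c + k)
      = R ^ c * ((R ^ (n + 1) - 1) / (R - 1)) := hgeom
    _ ≤ R ^ c * (R ^ (n + 1) / (R - 1)) := by gcongr; linarith
    _ = R / (R - 1) * R ^ (c + n) := by rw [pow_add, pow_succ]; ring

lemma tsum_ite_pow_add_le {R : ℝ} (hR : 1 < R) (c : ℕ) {P : ℕ → Prop} [DecidablePred P]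
    (hP : Antitone P) {y : ℝ≥0∞} (hy : ∀ k, P k → ENNReal.ofReal (R ^ (c + k)) ≤ y) :
    ∑' k, (if P k then ENNReal.ofReal (R ^ (c + k)) else 0) ≤
      ENNReal.ofReal (R / (R - 1)) * y := by
  refine ENNReal.tsum_le_of_sum_range_le fun n => ?_
  induction n with
  | zero => simp
  | succ n ih =>
    by_cases hn : P n
    · have hall : ∀ k ∈ Finset.range (n + 1), P k :=
        fun k hk => hP (Finset.mem_range_succ_iff.1 hk) hn
      rw [Finset.sum_congr rfl fun k hk => if_pos (hall k hk),
        ← ENNReal.ofReal_sum_of_nonneg fun k _ => by positivity]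
      calc ENNReal.ofReal (∑ k ∈ Finset.range (n + 1), R ^ (c + k))
          ≤ ENNReal.ofReal (R / (R - 1) * R ^ (c + n)) :=
            ENNReal.ofReal_le_ofReal (sum_range_pow_add_le hR c n)
        _ = ENNReal.ofReal (R / (R - 1)) * ENNReal.ofReal (R ^ (c + n)) :=
            ENNReal.ofReal_mul (div_nonneg (by linarith) (by linarith))
        _ ≤ ENNReal.ofReal (R / (R - 1)) * y := by gcongr; exact hy n hn
    · rwa [Finset.sum_range_succ, if_neg hn, add_zero]

lemma setLIntegral_indicator_Ioo_const {a b : ℝ} (hab : a ≤ b) (C : ℝ≥0∞) :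
    ∫⁻ ε in Set.Ioc 0 b, (Set.Ioo 0 a).indicator (fun _ => C) ε = C * ENNReal.ofReal a := by
  rw [lintegral_indicator_const measurableSet_Ioo, Measure.restrict_apply measurableSet_Ioo,
    Set.inter_eq_left.2 (Set.Ioo_subset_Ioc_self.trans (Set.Ioc_subset_Ioc_right hab)),
    Real.volume_Ioo, sub_zero]

section rad

variable {T : Type*} [MetricSpace T] [MeasurableSpace T] {m : Measure T} {φ : ℝ → ℝ}
  {R : ℝ} {x : T}

lemma rad_nonneg (k : ℕ) : 0 ≤ rad m φ R k x := by
  cases k with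
  | zero => exact Metric.diam_nonneg
  | succ k => exact Real.sInf_nonneg fun _ hε => hε.1

lemma ofReal_lt_one_div_measure_closedBall {k : ℕ} {ε : ℝ} (hε : 0 ≤ ε)
    (hεr : ε < rad m φ R (k + 1) x) :
    ENNReal.ofReal (φ (R ^ (k + 1))) < 1 / m (Metric.closedBall x ε) :=
  lt_of_not_ge fun h => hεr.not_ge (csInf_le ⟨0, fun _ hδ => hδ.1⟩ ⟨hε, h⟩)

lemma rad_le_rad [BoundedSpace T] [IsProbabilityMeasure m]
    (hmono : MonotoneOn φ (Set.Ici 0)) (hφ1 : φ 1 = 1) (hR : 1 ≤ R) {i j : ℕ}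
    (hi : 1 ≤ i) (hij : i ≤ j) : rad m φ R j x ≤ rad m φ R i x := by
  obtain ⟨i, rfl⟩ := Nat.exists_eq_add_of_le' hi
  obtain ⟨j, rfl⟩ := Nat.exists_eq_add_of_le' (hi.trans hij)
  have hpow : ∀ n : ℕ, R ^ n ∈ Set.Ici 0 := fun n => Set.mem_Ici.2 (by positivity)
  have hball : Metric.closedBall x (Metric.diam (Set.univ : Set T)) = Set.univ :=
    Set.eq_univ_of_forall fun y => Metric.dist_le_diam_of_mem
      (Bornology.isBounded_univ.2 inferInstance) trivial trivial
  have hφR : 1 ≤ φ (R ^ (i + 1)) :=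
    hφ1 ▸ hmono (Set.mem_Ici.2 zero_le_one) (hpow _) (one_le_pow₀ hR)
  -- the defining set of `r_i` is nonempty: it contains `diam T`, as `φ(R^i) ≥ φ 1 = 1`
  refine csInf_le_csInf ⟨0, fun _ hε => hε.1⟩
    ⟨Metric.diam (Set.univ : Set T), Metric.diam_nonneg, ?_⟩ fun ε hε => ⟨hε.1, hε.2.trans ?_⟩
  · rw [hball, measure_univ, div_one]
    exact ENNReal.one_le_ofReal.2 hφR
  · exact ENNReal.ofReal_le_ofReal (hmono (hpow _) (hpow _) (pow_le_pow_right₀ hR (by omega)))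

end rad

theorem statement12_general (T : Type) [MetricSpace T] [CompactSpace T]
    [MeasurableSpace T]
    (m : Measure T) (hm : IsProbabilityMeasure m)
    (φ : ℝ → ℝ) (hφ : IsYoungFunction φ) (hφ1 : φ 1 = 1)
    (R : ℝ) (hR : 2 < R) :
    ∀ c : ℕ, 1 ≤ c → ∀ x : T,
      ∑' k : ℕ, ENNReal.ofReal (rad m φ R (c + k) x * R ^ (c + k)) ≤
        ENNReal.ofReal (R / (R - 1)) *
          ∫⁻ ε in Set.Ioc (0 : ℝ) (rad m φ R c x),
            yinv φ (1 / m (Metric.closedBall x ε)) := by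
  classical
  intro c hc x
  have hmono := hφ.1
  have hR1 : 1 < R := by linarith
  set r : ℕ → ℝ := fun k => rad m φ R k x
  have hr_le : ∀ i j, i ≤ j → r (c + j) ≤ r (c + i) := fun i j hij =>
    rad_le_rad hmono hφ1 hR1.le (by omega) (by omega)
  have hpointwise : ∀ ε, ∑' k, (Set.Ioo 0 (r (c + k))).indicator
      (fun _ => ENNReal.ofReal (R ^ (c + k))) ε ≤
        ENNReal.ofReal (R / (R - 1)) * yinv φ (1 / m (Metric.closedBall x ε)) := by
    intro ε
    simp only [Set.indicator_apply]
    refine tsum_ite_pow_add_le hR1 c (fun i j hij hj => ⟨hj.1, hj.2.trans_le (hr_le i j hij)⟩)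
      fun k hk => ofReal_le_yinv hmono (by positivity) ?_
    obtain ⟨n, hn⟩ := Nat.exists_eq_add_of_le' (show 1 ≤ c + k by omega)
    simp only [r, hn] at hk ⊢
    exact ofReal_lt_one_div_measure_closedBall hk.1.le hk.2
  calc ∑' k, ENNReal.ofReal (r (c + k) * R ^ (c + k))
      = ∑' k, ∫⁻ ε in Set.Ioc 0 (r c), (Set.Ioo 0 (r (c + k))).indicator
          (fun _ => ENNReal.ofReal (R ^ (c + k))) ε := by
        refine tsum_congr fun k => ?_
        rw [setLIntegral_indicator_Ioo_const (by simpa using hr_le 0 k (by omega)),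
          ENNReal.ofReal_mul (rad_nonneg _), mul_comm]
    _ = ∫⁻ ε in Set.Ioc 0 (r c), ∑' k, (Set.Ioo 0 (r (c + k))).indicator
          (fun _ => ENNReal.ofReal (R ^ (c + k))) ε :=
        (lintegral_tsum fun k => (measurable_const.indicator measurableSet_Ioo).aemeasurable).symm
    _ ≤ ∫⁻ ε in Set.Ioc 0 (r c),
          ENNReal.ofReal (R / (R - 1)) * yinv φ (1 / m (Metric.closedBall x ε)) :=
        lintegral_mono hpointwise
    _ = _ := lintegral_const_mul' _ _ ENNReal.ofReal_ne_top

/-- inequality (2.3) of the paper: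
`∑_{k ≥ c} r_k(x) R^k ≤ (R/(R-1)) ∫_0^{r_c(x)} φ⁻¹(1/m(B(x,ε))) dε`. -/
theorem statement12 (T : Type) [MetricSpace T] [CompactSpace T]
    [MeasurableSpace T] [BorelSpace T]
    (m : Measure T) (hm : IsProbabilityMeasure m)
    (φ : ℝ → ℝ) (hφ : IsYoungFunction φ) (hφ1 : φ 1 = 1)
    (R : ℝ) (hR : 2 < R) :
    ∀ c : ℕ, 1 ≤ c → ∀ x : T,
      ∑' k : ℕ, ENNReal.ofReal (rad m φ R (c + k) x * R ^ (c + k)) ≤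
        ENNReal.ofReal (R / (R - 1)) *
          ∫⁻ ε in Set.Ioc (0 : ℝ) (rad m φ R c x),
            yinv φ (1 / m (Metric.closedBall x ε)) :=
  statement12_general T m hm φ hφ hφ1 R hR
end
end

section
/- Let (T,d) be a compact metric space, m a Borel probability measure on T, φ a Young function with φ(1)=1, and R > 2. Fix integers 0 ≤ k < l and x ∈ T. Then for every u ∈ B^l_{k+1}(x): r_k(u) ≤ r_k(x) + r^l_{k+1}(x) ≤ r^l_k(x), and B_k(u) ⊆ B^l_k(x). -/
open MeasureTheory ENNReal Filter

noncomputable section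

lemma rad_nonneg_s13 {T : Type} [MetricSpace T] [MeasurableSpace T]
    (m : Measure T) (φ : ℝ → ℝ) (R : ℝ) (i : ℕ) (x : T) : 0 ≤ rad m φ R i x := by
  cases i with
  | zero => exact Metric.diam_nonneg
  | succ j => exact Real.sInf_nonneg (fun e he => he.1)

lemma radl_nonneg {T : Type} [MetricSpace T] [MeasurableSpace T]
    (m : Measure T) (φ : ℝ → ℝ) (R : ℝ) (k l : ℕ) (x : T) : 0 ≤ radl m φ R k l x :=
  Finset.sum_nonneg fun i _ => mul_nonneg (by positivity) (rad_nonneg_s13 m φ R i x)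

lemma radl_split {T : Type} [MetricSpace T] [MeasurableSpace T]
    (m : Measure T) (φ : ℝ → ℝ) (R : ℝ) (k l : ℕ) (hkl : k ≤ l) (x : T) :
    radl m φ R k l x = rad m φ R k x + 2 * radl m φ R (k + 1) l x := by
  unfold radl
  have hk : k ∈ Finset.Icc k l := Finset.mem_Icc.mpr ⟨le_refl k, hkl⟩
  rw [← Finset.sum_erase_add _ _ hk, Finset.Icc_erase_left, ← Finset.Icc_add_one_left_eq_Ioc,
    Nat.sub_self, pow_zero, one_mul, Finset.mul_sum]
  rw [add_comm]
  congr 1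
  apply Finset.sum_congr rfl
  intro i hi
  have hik : k + 1 ≤ i := (Finset.mem_Icc.mp hi).1
  have : i - k = (i - (k + 1)) + 1 := by omega
  rw [this, pow_succ]
  ring

lemma rad_le_add {T : Type} [MetricSpace T] [CompactSpace T] [MeasurableSpace T]
    (m : Measure T) (hm : IsProbabilityMeasure m)
    (φ : ℝ → ℝ) (hφ : IsYoungFunction φ) (hφ1 : φ 1 = 1)
    (R : ℝ) (hR : 2 < R) (k : ℕ) (x u : T) (D : ℝ) (hD : 0 ≤ D)
    (hxu : dist u x ≤ D) : rad m φ R k u ≤ rad m φ R k x + D := by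
  cases k with
  | zero =>
    simp only [rad]
    linarith
  | succ j =>
    simp only [rad]
    set c := ENNReal.ofReal (φ (R ^ (j + 1))) with hc
    have hdmem : Metric.diam (Set.univ : Set T) ∈
        {ε : ℝ | 0 ≤ ε ∧ 1 / m (Metric.closedBall x ε) ≤ c} := by
      refine ⟨Metric.diam_nonneg, ?_⟩
      have huniv : (Set.univ : Set T) ⊆ Metric.closedBall x (Metric.diam Set.univ) :=
        fun y _ => Metric.mem_closedBall.mpr
          (Metric.dist_le_diam_of_mem (isCompact_univ.isBounded) trivial trivial)
      have hmeq : m (Metric.closedBall x (Metric.diam (Set.univ : Set T))) = 1 :=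
        le_antisymm prob_le_one (by
          rw [← measure_univ (μ := m)]; exact measure_mono huniv)
      rw [hmeq]
      rw [div_one]
      have hR1 : (1 : ℝ) ≤ R ^ (j + 1) := one_le_pow₀ (by linarith)
      have hmono := hφ.1 (Set.mem_Ici.mpr zero_le_one)
        (Set.mem_Ici.mpr (le_trans zero_le_one hR1)) hR1
      rw [hφ1] at hmono
      exact ENNReal.one_le_ofReal.mpr hmono
    have hbddu : BddBelow {ε : ℝ | 0 ≤ ε ∧ 1 / m (Metric.closedBall u ε) ≤ c} :=
      ⟨0, fun e he => he.1⟩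
    have key : ∀ e ∈ {ε : ℝ | 0 ≤ ε ∧ 1 / m (Metric.closedBall x ε) ≤ c},
        sInf {ε : ℝ | 0 ≤ ε ∧ 1 / m (Metric.closedBall u ε) ≤ c} ≤ e + D := by
      intro e he
      apply csInf_le hbddu
      refine ⟨by linarith [he.1], ?_⟩
      calc 1 / m (Metric.closedBall u (e + D))
          ≤ 1 / m (Metric.closedBall x e) := by
            rw [one_div, one_div]
            refine ENNReal.inv_le_inv.mpr (measure_mono
              (Metric.closedBall_subset_closedBall' ?_))
            rw [dist_comm]
            linarith
        _ ≤ c := he.2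
    have h2 : sInf {ε : ℝ | 0 ≤ ε ∧ 1 / m (Metric.closedBall u ε) ≤ c} - D ≤
        sInf {ε : ℝ | 0 ≤ ε ∧ 1 / m (Metric.closedBall x ε) ≤ c} := by
      refine le_csInf ⟨_, hdmem⟩ (fun e he => ?_)
      linarith [key e he]
    linarith

/-- Lemma 5 of the paper. -/
theorem statement13 (T : Type) [MetricSpace T] [CompactSpace T]
    [MeasurableSpace T] [BorelSpace T]
    (m : Measure T) (hm : IsProbabilityMeasure m)
    (φ : ℝ → ℝ) (hφ : IsYoungFunction φ) (hφ1 : φ 1 = 1)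
    (R : ℝ) (hR : 2 < R)
    (k l : ℕ) (hkl : k < l) (x : T) :
    ∀ u ∈ Metric.closedBall x (radl m φ R (k + 1) l x),
      rad m φ R k u ≤ rad m φ R k x + radl m φ R (k + 1) l x ∧
      rad m φ R k x + radl m φ R (k + 1) l x ≤ radl m φ R k l x ∧
      Metric.closedBall u (rad m φ R k u) ⊆
        Metric.closedBall x (radl m φ R k l x) := by
  intro u hu
  have hxu : dist u x ≤ radl m φ R (k + 1) l x := Metric.mem_closedBall.mp hu
  have hD : 0 ≤ radl m φ R (k + 1) l x := radl_nonneg m φ R (k + 1) l x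
  have h1 := rad_le_add m hm φ hφ hφ1 R hR k x u _ hD hxu
  have hsplit := radl_split m φ R k l hkl.le x
  refine ⟨h1, by linarith, ?_⟩
  intro v hv
  simp only [Metric.mem_closedBall] at hv ⊢
  have := dist_triangle v u x
  linarith
end
end

section
/- Let (T,d) be a compact metric space, m a Borel probability measure on T, φ and ψ Young functions with φ(1)=ψ(1)=1, R > 2, and n₀ ≥ 1 an integer. Fix t ∈ T and an integer l ≥ 1, and define h_l : [0,∞) → [0,∞) by h_l(ε) := 0 for 0 ≤ ε < r_{l+1}(t); h_l(ε) := R^{k−n₀} for r_{k+1}(t) ≤ ε < r_k(t) with 1 ≤ k ≤ l; and h_l(ε) := R^{−n₀} for r_1(t) ≤ ε. Then ∫_T ψ( h_l(d(t,u)) ) m(du) ≤ Σ_{k=0}^{l} ψ(R^{k−n₀}) / φ(R^k). -/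
/-! For `u` with `r_{k+1}(t) ≤ d(t,u) < r_k(t)` the integrand is `ψ(R^{k-n₀})`, so it is at most
`ψ(R^{-n₀})` plus the sum over `1 ≤ k ≤ l` of `ψ(R^{k-n₀})` times the indicator of the open ball
`B°(t, r_k(t))`. Every closed ball `B(t,ε)` with `ε < r_k(t)` fails the condition defining
`r_k(t)`, i.e. has measure `< 1/φ(R^k)`; by continuity from below so does `B°(t, r_k(t))`, and
integrating the pointwise bound gives the sum. -/

open MeasureTheory ENNReal Filter

noncomputable section

namespace IsYoungFunction

variable {φ : ℝ → ℝ}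

lemma nonneg (hφ : IsYoungFunction φ) {x : ℝ} (hx : 0 ≤ x) : 0 ≤ φ x := by
  simpa [hφ.2.2.1] using hφ.1 (Set.mem_Ici.2 le_rfl) hx hx

lemma one_le_of_one_le (hφ : IsYoungFunction φ) (hφ1 : φ 1 = 1) {x : ℝ} (hx : 1 ≤ x) :
    1 ≤ φ x :=
  hφ1 ▸ hφ.1 (Set.mem_Ici.2 zero_le_one) (Set.mem_Ici.2 (zero_le_one.trans hx)) hx

end IsYoungFunction

lemma exists_le_lt_of_lt_of_le {α : Type*} [LinearOrder α] (a : ℕ → α) {x : α} {m n : ℕ}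
    (hmn : m ≤ n) (hm : x < a m) (hn : a n ≤ x) : ∃ k, m ≤ k ∧ k < n ∧ a (k + 1) ≤ x ∧ x < a k := by
  induction n, hmn using Nat.le_induction with
  | base => exact absurd hn (not_le.2 hm)
  | succ n hmn ih =>
    rcases le_or_gt (a n) x with hle | hlt
    · obtain ⟨k, hmk, hkn, hk⟩ := ih hle
      exact ⟨k, hmk, hkn.trans n.lt_succ_self, hk⟩
    · exact ⟨n, hmn, n.lt_succ_self, hn, hlt⟩

lemma ofReal_comp_step_le {r v : ℕ → ℝ} {f h : ℝ → ℝ} {l : ℕ} (hf0 : f 0 = 0)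
    (h_low : ∀ ε : ℝ, 0 ≤ ε → ε < r (l + 1) → h ε = 0)
    (h_mid : ∀ k : ℕ, 1 ≤ k → k ≤ l → ∀ ε : ℝ, r (k + 1) ≤ ε → ε < r k → h ε = v k)
    (h_top : ∀ ε : ℝ, r 1 ≤ ε → h ε = v 0) {ε : ℝ} (hε : 0 ≤ ε) :
    ENNReal.ofReal (f (h ε)) ≤ ENNReal.ofReal (f (v 0)) +
      ∑ j ∈ Finset.range l,
        (Set.Iio (r (j + 1))).indicator (fun _ => ENNReal.ofReal (f (v (j + 1)))) ε := by
  rcases le_or_gt (r 1) ε with hε_top | hε_lt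
  · rw [h_top ε hε_top]
    exact le_self_add
  rcases lt_or_ge ε (r (l + 1)) with hε_low | hε_ge
  · simp [h_low ε hε hε_low, hf0]
  obtain ⟨k, hk1, hkl, hk⟩ := exists_le_lt_of_lt_of_le r (by omega) hε_lt hε_ge
  obtain ⟨j, rfl⟩ : ∃ j, k = j + 1 := ⟨k - 1, by omega⟩
  rw [h_mid (j + 1) hk1 (by omega) ε hk.1 hk.2]
  calc ENNReal.ofReal (f (v (j + 1)))
      = (Set.Iio (r (j + 1))).indicator (fun _ => ENNReal.ofReal (f (v (j + 1)))) ε :=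
        (Set.indicator_of_mem (Set.mem_Iio.2 hk.2) fun _ => ENNReal.ofReal (f (v (j + 1)))).symm
    _ ≤ ∑ i ∈ Finset.range l,
          (Set.Iio (r (i + 1))).indicator (fun _ => ENNReal.ofReal (f (v (i + 1)))) ε :=
        Finset.single_le_sum (f := fun i =>
          (Set.Iio (r (i + 1))).indicator (fun _ => ENNReal.ofReal (f (v (i + 1)))) ε)
          (fun _ _ => bot_le) (Finset.mem_range.2 (by omega))
    _ ≤ _ := le_add_self

lemma measure_ball_le_of_forall_lt {α : Type*} [PseudoMetricSpace α] [MeasurableSpace α]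
    (μ : Measure α) (x : α) {r : ℝ} {c : ℝ≥0∞}
    (h : ∀ ε : ℝ, 0 ≤ ε → ε < r → μ (Metric.closedBall x ε) ≤ c) :
    μ (Metric.ball x r) ≤ c := by
  rcases le_or_gt r 0 with hr | hr
  · simp [Metric.ball_eq_empty.2 hr]
  obtain ⟨u, hu_mono, hu_mem, hu_lim⟩ := exists_seq_strictMono_tendsto' hr
  have hball : Metric.ball x r = ⋃ n, Metric.closedBall x (u n) := by
    refine subset_antisymm (fun y hy => ?_)
      (Set.iUnion_subset fun n => Metric.closedBall_subset_ball (hu_mem n).2)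
    obtain ⟨n, hn⟩ := (hu_lim.eventually (lt_mem_nhds (Metric.mem_ball.1 hy))).exists
    exact Set.mem_iUnion.2 ⟨n, Metric.mem_closedBall.2 hn.le⟩
  have hmono : Monotone fun n => Metric.closedBall x (u n) := fun _ _ hmn =>
    Metric.closedBall_subset_closedBall (hu_mono.monotone hmn)
  rw [hball, hmono.measure_iUnion]
  exact iSup_le fun n => h _ (hu_mem n).1.le (hu_mem n).2

/-- Every radius below `r_{k+1}(x)` violates the condition defining `r_{k+1}(x)`. -/
lemma measure_ball_rad_succ_le {T : Type*} [MetricSpace T] [MeasurableSpace T]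
    (m : Measure T) (φ : ℝ → ℝ) (R : ℝ) (k : ℕ) (x : T) :
    m (Metric.ball x (rad m φ R (k + 1) x)) ≤ (ENNReal.ofReal (φ (R ^ (k + 1))))⁻¹ := by
  refine measure_ball_le_of_forall_lt m x fun ε hε hεr => ?_
  by_contra! hlt
  refine hεr.not_ge (csInf_le ⟨0, fun _ hδ => hδ.1⟩ ⟨hε, ?_⟩)
  rw [one_div]
  exact (ENNReal.inv_lt_iff_inv_lt.1 hlt).le

lemma lintegral_indicator_Iio_dist {T : Type*} [MetricSpace T] [MeasurableSpace T]
    [OpensMeasurableSpace T] (m : Measure T) (t : T) (r : ℝ) (c : ℝ≥0∞) :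
    ∫⁻ u, (Set.Iio r).indicator (fun _ => c) (dist t u) ∂m = c * m (Metric.ball t r) := by
  rw [← lintegral_indicator_const Metric.isOpen_ball.measurableSet]
  congr 1 with u
  simp only [Set.indicator, Set.mem_Iio, Metric.mem_ball']

theorem statement19_general (T : Type) [MetricSpace T]
    [MeasurableSpace T] [BorelSpace T]
    (m : Measure T) (hm : IsProbabilityMeasure m)
    (φ ψ : ℝ → ℝ) (hφ : IsYoungFunction φ) (hψ : IsYoungFunction ψ)
    (hφ1 : φ 1 = 1)
    (R : ℝ) (hR : 2 < R) (n₀ : ℕ)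
    (t : T) (l : ℕ)
    (h : ℝ → ℝ)
    (h_low : ∀ ε : ℝ, 0 ≤ ε → ε < rad m φ R (l + 1) t → h ε = 0)
    (h_mid : ∀ k : ℕ, 1 ≤ k → k ≤ l → ∀ ε : ℝ,
      rad m φ R (k + 1) t ≤ ε → ε < rad m φ R k t → h ε = R ^ ((k : ℤ) - (n₀ : ℤ)))
    (h_top : ∀ ε : ℝ, rad m φ R 1 t ≤ ε → h ε = R ^ (-(n₀ : ℤ))) :
    ∫⁻ u, ENNReal.ofReal (ψ (h (dist t u))) ∂m ≤
      ENNReal.ofReal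
        (∑ k ∈ Finset.range (l + 1), ψ (R ^ ((k : ℤ) - (n₀ : ℤ))) / φ (R ^ k)) := by
  set v : ℕ → ℝ := fun k => R ^ ((k : ℤ) - (n₀ : ℤ))
  have hφR : ∀ k : ℕ, 0 < φ (R ^ k) := fun k =>
    one_pos.trans_le (hφ.one_le_of_one_le hφ1 (one_le_pow₀ (by linarith)))
  have hterm : ∀ k : ℕ, 0 ≤ ψ (v k) / φ (R ^ k) := fun k =>
    div_nonneg (hψ.nonneg (zpow_nonneg (by linarith) _)) (hφR k).le
  have hpoint := fun u => ofReal_comp_step_le (r := fun k => rad m φ R k t) (v := v) (f := ψ)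
    hψ.2.2.1 h_low h_mid (by simpa [v] using h_top) (dist_nonneg (x := t) (y := u))
  calc ∫⁻ u, ENNReal.ofReal (ψ (h (dist t u))) ∂m
      ≤ ENNReal.ofReal (ψ (v 0)) + ∑ j ∈ Finset.range l,
          ENNReal.ofReal (ψ (v (j + 1))) * m (Metric.ball t (rad m φ R (j + 1) t)) := by
        refine (lintegral_mono hpoint).trans_eq ?_
        rw [lintegral_add_left measurable_const, lintegral_const, hm.measure_univ, mul_one,
          lintegral_finsetSum _ fun j _ => by fun_prop (disch := measurability)]
        simp only [lintegral_indicator_Iio_dist]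
    _ ≤ ENNReal.ofReal (ψ (v 0)) + ∑ j ∈ Finset.range l,
          ENNReal.ofReal (ψ (v (j + 1))) * (ENNReal.ofReal (φ (R ^ (j + 1))))⁻¹ := by
        gcongr with j
        exact measure_ball_rad_succ_le m φ R j t
    _ = _ := by
        rw [Finset.sum_range_succ', add_comm,
          ENNReal.ofReal_add (Finset.sum_nonneg fun j _ => hterm _) (hterm 0),
          ENNReal.ofReal_sum_of_nonneg fun j _ => hterm _]
        congr 1
        · exact Finset.sum_congr rfl fun j _ => by
            rw [ENNReal.ofReal_div_of_pos (hφR _), div_eq_mul_inv]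
        · simp [hφ1]

/-- inequality (4.4) of the paper. -/
theorem statement19 (T : Type) [MetricSpace T] [CompactSpace T]
    [MeasurableSpace T] [BorelSpace T]
    (m : Measure T) (hm : IsProbabilityMeasure m)
    (φ ψ : ℝ → ℝ) (hφ : IsYoungFunction φ) (hψ : IsYoungFunction ψ)
    (hφ1 : φ 1 = 1) (hψ1 : ψ 1 = 1)
    (R : ℝ) (hR : 2 < R) (n₀ : ℕ) (hn₀ : 1 ≤ n₀)
    (t : T) (l : ℕ) (hl : 1 ≤ l)
    (h : ℝ → ℝ)
    (h_low : ∀ ε : ℝ, 0 ≤ ε → ε < rad m φ R (l + 1) t → h ε = 0)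
    (h_mid : ∀ k : ℕ, 1 ≤ k → k ≤ l → ∀ ε : ℝ,
      rad m φ R (k + 1) t ≤ ε → ε < rad m φ R k t → h ε = R ^ ((k : ℤ) - (n₀ : ℤ)))
    (h_top : ∀ ε : ℝ, rad m φ R 1 t ≤ ε → h ε = R ^ (-(n₀ : ℤ))) :
    ∫⁻ u, ENNReal.ofReal (ψ (h (dist t u))) ∂m ≤
      ENNReal.ofReal
        (∑ k ∈ Finset.range (l + 1), ψ (R ^ ((k : ℤ) - (n₀ : ℤ))) / φ (R ^ k)) :=
  statement19_general T m hm φ ψ hφ hψ hφ1 R hR n₀ t l h h_low h_mid h_top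
end
end
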